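/- arXiv:math/0603004 — 7 statements merged into one kernel-verified Lean document; each statement's English description precedes it below -/
import Mathlib

section
/- Let W be a ℂ-vector space of dimension at least 3 with a symmetric bilinear form of rank 1. Then so(W) = Λ²W (with bracket as above) is nilpotent but not abelian. -/
open TensorProduct

/-- If `dim W ≥ 3` and the symmetric form on `W` has rank one (`W = K ⊕ ℂv`, `K` the
radical, `⟨v,v⟩ = 1`), then `so(W) = Λ²W` is nilpotent (of class at most 2) but not
abelian. -/
theorem stmt6 (W : Type*) [AddCommGroup W] [Module ℂ W]
    (B : W →ₗ[ℂ] W →ₗ[ℂ] ℂ) (hsymm : ∀ a b : W, B a b = B b a)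
    (K : Submodule ℂ W) (v : W) (hvv : B v v = 1) (hvK : v ∉ K)
    (hK : ∀ k ∈ K, ∀ u : W, B k u = 0)
    (hsup : K ⊔ Submodule.span ℂ {v} = ⊤)
    (hdim : 3 ≤ Module.rank ℂ W)
    (m : (W ⊗[ℂ] W) →ₗ[ℂ] (W ⊗[ℂ] W) →ₗ[ℂ] (W ⊗[ℂ] W))
    (hm : ∀ a b a' b' : W, m (a ⊗ₜ[ℂ] b) (a' ⊗ₜ[ℂ] b') = B a' b • (a ⊗ₜ[ℂ] b')) :
    (∀ x ∈ Submodule.span ℂ {z : W ⊗[ℂ] W | ∃ a b : W, z = a ⊗ₜ[ℂ] b - b ⊗ₜ[ℂ] a},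
     ∀ y ∈ Submodule.span ℂ {z : W ⊗[ℂ] W | ∃ a b : W, z = a ⊗ₜ[ℂ] b - b ⊗ₜ[ℂ] a},
     ∀ z ∈ Submodule.span ℂ {z : W ⊗[ℂ] W | ∃ a b : W, z = a ⊗ₜ[ℂ] b - b ⊗ₜ[ℂ] a},
       m (m x y - m y x) z - m z (m x y - m y x) = 0) ∧
    (∃ x ∈ Submodule.span ℂ {z : W ⊗[ℂ] W | ∃ a b : W, z = a ⊗ₜ[ℂ] b - b ⊗ₜ[ℂ] a},
     ∃ y ∈ Submodule.span ℂ {z : W ⊗[ℂ] W | ∃ a b : W, z = a ⊗ₜ[ℂ] b - b ⊗ₜ[ℂ] a},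
       m x y - m y x ≠ 0) := by
  classical
  -- an opaque "rank-one" functional
  obtain ⟨f, hfB⟩ : ∃ f : W → ℂ, ∀ x y : W, B x y = f x * f y := by
    refine ⟨fun w => B v w, fun x y => ?_⟩
    have hmem : ∀ w : W, w ∈ K ⊔ Submodule.span ℂ {v} := by rw [hsup]; intro w; trivial
    obtain ⟨k, hk, s, hs, hx⟩ := Submodule.mem_sup.mp (hmem x)
    obtain ⟨l, hl, t, ht, hy⟩ := Submodule.mem_sup.mp (hmem y)
    obtain ⟨c, rfl⟩ := Submodule.mem_span_singleton.mp hs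
    obtain ⟨d, rfl⟩ := Submodule.mem_span_singleton.mp ht
    have h1 : B v l = 0 := (hsymm v l).trans (hK l hl v)
    have h2 : B v k = 0 := (hsymm v k).trans (hK k hk v)
    subst hx hy
    simp only [map_add, map_smul, LinearMap.add_apply, LinearMap.smul_apply,
      hK k hk, hK l hl, h1, h2, hvv, smul_eq_mul]
    ring
  set S := Submodule.span ℂ {z : W ⊗[ℂ] W | ∃ a b : W, z = a ⊗ₜ[ℂ] b - b ⊗ₜ[ℂ] a} with hS
  set Z : Submodule ℂ (W ⊗[ℂ] W) := LinearMap.ker m ⊓ LinearMap.ker m.flip with hZdef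
  have hZgen : ∀ a b a' b' : W,
      (m (a ⊗ₜ[ℂ] b - b ⊗ₜ[ℂ] a) (a' ⊗ₜ[ℂ] b' - b' ⊗ₜ[ℂ] a') -
       m (a' ⊗ₜ[ℂ] b' - b' ⊗ₜ[ℂ] a') (a ⊗ₜ[ℂ] b - b ⊗ₜ[ℂ] a)) ∈ Z := by
    intro a b a' b'
    refine Submodule.mem_inf.mpr ⟨LinearMap.mem_ker.mpr ?_, LinearMap.mem_ker.mpr ?_⟩ <;>
      refine TensorProduct.ext' fun c d => ?_
    · simp only [map_sub, LinearMap.sub_apply, hm, map_smul, LinearMap.smul_apply,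
        LinearMap.zero_apply, hfB, smul_smul]
      match_scalars <;> ring
    · simp only [map_sub, LinearMap.sub_apply, LinearMap.flip_apply, hm, map_smul,
        LinearMap.smul_apply, LinearMap.zero_apply, hfB, smul_smul]
      match_scalars <;> ring
  have hbr : ∀ x ∈ S, ∀ y ∈ S, m x y - m y x ∈ Z := by
    intro x hx y hy
    induction hx, hy using Submodule.span_induction₂ with
    | mem_mem x y hx hy =>
        obtain ⟨a, b, rfl⟩ := hx
        obtain ⟨a', b', rfl⟩ := hy
        exact hZgen a b a' b'
    | zero_left y hy => simp
    | zero_right x hx => simp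
    | add_left x y z hx hy hz h1 h2 =>
        have h : m (x + y) z - m z (x + y) = (m x z - m z x) + (m y z - m z y) := by
          simp only [map_add, LinearMap.add_apply]; abel
        rw [h]; exact add_mem h1 h2
    | add_right x y z hx hy hz h1 h2 =>
        have h : m x (y + z) - m (y + z) x = (m x y - m y x) + (m x z - m z x) := by
          simp only [map_add, LinearMap.add_apply]; abel
        rw [h]; exact add_mem h1 h2
    | smul_left r x y hx hy h =>
        have h' : m (r • x) y - m y (r • x) = r • (m x y - m y x) := by
          simp only [map_smul, LinearMap.smul_apply, smul_sub]
        rw [h']; exact Submodule.smul_mem _ r h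
    | smul_right r x y hx hy h =>
        have h' : m x (r • y) - m (r • y) x = r • (m x y - m y x) := by
          simp only [map_smul, LinearMap.smul_apply, smul_sub]
        rw [h']; exact Submodule.smul_mem _ r h
  constructor
  · intro x hx y hy z hz
    obtain ⟨h1, h2⟩ := Submodule.mem_inf.mp (hbr x hx y hy)
    rw [LinearMap.mem_ker] at h1 h2
    have e1 : m (m x y - m y x) z = 0 := by rw [h1]; simp
    have e2 : m z (m x y - m y x) = 0 := by
      have := LinearMap.congr_fun h2 z
      rwa [LinearMap.flip_apply, LinearMap.zero_apply] at this
    rw [e1, e2, sub_zero]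
  · -- rank of K is at least 2
    have hsv : Module.rank ℂ (Submodule.span ℂ ({v} : Set W)) ≤ 1 := by
      simpa using rank_span_le (R := ℂ) ({v} : Set W)
    have h3 : (2 : Cardinal) + 1 ≤ Module.rank ℂ K + 1 := by
      calc (2 : Cardinal) + 1 = 3 := by norm_num
        _ ≤ Module.rank ℂ W := hdim
        _ = Module.rank ℂ (⊤ : Submodule ℂ W) := (rank_top ℂ W).symm
        _ = Module.rank ℂ (K ⊔ Submodule.span ℂ {v} : Submodule ℂ W) := by rw [hsup]
        _ ≤ Module.rank ℂ K + Module.rank ℂ (Submodule.span ℂ ({v} : Set W)) :=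
            Submodule.rank_add_le_rank_add_rank _ _
        _ ≤ Module.rank ℂ K + 1 := by exact add_le_add_right hsv _
    have hrankK : (2 : Cardinal) ≤ Module.rank ℂ K := Cardinal.add_one_le_add_one_iff.mp h3
    obtain ⟨s, hs2, hsli⟩ := le_rank_iff_exists_linearIndependent.mp hrankK
    obtain ⟨p, q, hpq, -⟩ := Cardinal.mk_eq_two_iff.mp hs2
    -- the two vectors in W
    set a : W := ((p : K) : W) with ha
    set b : W := ((q : K) : W) with hb
    have haK : a ∈ K := (p : K).2
    have hbK : b ∈ K := (q : K).2
    have hprK : (p : K) ≠ (q : K) := fun h => hpq (Subtype.ext h)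
    have hab : a ≠ b := fun h => hprK (Subtype.ext h)
    -- linear independence of {a, b} in W
    have hsub : ({(p : K), (q : K)} : Set K) ⊆ s := by
      rintro x (rfl | rfl) <;> simp [Subtype.coe_prop]
    have liK : LinearIndependent ℂ ((↑) : ({(p : K), (q : K)} : Set K) → K) :=
      hsli.mono hsub
    have liW : LinearIndependent ℂ ((↑) : ({a, b} : Set W) → W) := by
      have h := LinearIndepOn.image (f := K.subtype) (liK : LinearIndepOn ℂ id _)
        (by simp [Submodule.ker_subtype])
      have himg : K.subtype '' ({(p : K), (q : K)} : Set K) = ({a, b} : Set W) := by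
        simp [Set.image_pair, ha, hb]
      rwa [himg] at h
    -- hide the set {a, b} behind an existential so its type does not mention a, b
    obtain ⟨t, hta, htb, liT⟩ :
        ∃ t : Set W, a ∈ t ∧ b ∈ t ∧ LinearIndepOn ℂ id t :=
      ⟨{a, b}, Set.mem_insert _ _, Set.mem_insert_of_mem _ rfl, liW⟩
    -- extend to a basis and get coordinate functionals
    have haext : a ∈ liT.extend (Set.subset_univ _) := liT.subset_extend _ hta
    have hbext : b ∈ liT.extend (Set.subset_univ _) := liT.subset_extend _ htb
    set bas := Module.Basis.extend liT with hbas
    obtain ⟨i, hi⟩ : ∃ i : liT.extend (Set.subset_univ _), bas i = a :=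
      ⟨⟨a, haext⟩, Module.Basis.extend_apply_self liT _⟩
    obtain ⟨j, hj⟩ : ∃ j : liT.extend (Set.subset_univ _), bas j = b :=
      ⟨⟨b, hbext⟩, Module.Basis.extend_apply_self liT _⟩
    have hij : i ≠ j := fun h => hab ((hi.symm.trans (congrArg bas h)).trans hj)
    set F : W →ₗ[ℂ] ℂ := bas.coord j with hF
    set G : W →ₗ[ℂ] ℂ := bas.coord i with hG
    have hFb : F b = 1 := by
      rw [hF, ← hj, Module.Basis.coord_apply, Module.Basis.repr_self_apply]
      simp
    have hFa : F a = 0 := by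
      rw [hF, ← hi, Module.Basis.coord_apply, Module.Basis.repr_self_apply]
      simp [hij]
    have hGa : G a = 1 := by
      rw [hG, ← hi, Module.Basis.coord_apply, Module.Basis.repr_self_apply]
      simp
    have hGb : G b = 0 := by
      rw [hG, ← hj, Module.Basis.coord_apply, Module.Basis.repr_self_apply]
      simp [hij.symm]
    -- the two elements of the span
    refine ⟨a ⊗ₜ[ℂ] v - v ⊗ₜ[ℂ] a, Submodule.subset_span ⟨a, v, rfl⟩,
            b ⊗ₜ[ℂ] v - v ⊗ₜ[ℂ] b, Submodule.subset_span ⟨b, v, rfl⟩, ?_⟩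
    have hva : B v a = 0 := (hsymm v a).trans (hK a haK v)
    have hvb : B v b = 0 := (hsymm v b).trans (hK b hbK v)
    have heval : m (a ⊗ₜ[ℂ] v - v ⊗ₜ[ℂ] a) (b ⊗ₜ[ℂ] v - v ⊗ₜ[ℂ] b) -
        m (b ⊗ₜ[ℂ] v - v ⊗ₜ[ℂ] b) (a ⊗ₜ[ℂ] v - v ⊗ₜ[ℂ] a) =
        b ⊗ₜ[ℂ] a - a ⊗ₜ[ℂ] b := by
      simp only [map_sub, LinearMap.sub_apply, hm, hva, hvb, hK a haK, hK b hbK, hvv,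
        one_smul, zero_smul]
      abel
    rw [heval]
    intro hcontra
    have := congrArg (TensorProduct.lift ((LinearMap.mul ℂ ℂ).compl₁₂ F G)) hcontra
    simp only [map_sub, TensorProduct.lift.tmul, LinearMap.compl₁₂_apply, LinearMap.mul_apply',
      hFa, hFb, hGa, hGb, map_zero] at this
    norm_num at this
end

section
/- Let V be a ℂ-vector space with a symmetric bilinear form, and let V⁰ ⊆ V be a subspace on which the restricted form is identically zero. Then every element x = Σᵢ vᵢ∧wᵢ of Λ²V⁰ ⊆ so(V), viewed as an endomorphism of V via (a∧b)·u = ⟨u,b⟩a − ⟨u,a⟩b, satisfies x² = 0 as an endomorphism of V. If instead the form restricted to V⁰ has rank 1, then x³ = 0 for every x ∈ Λ²V⁰. -/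
/-!
Write `f = Σᵢ vᵢ∧wᵢ`. Then `f u = Σᵢ ⟨u,wᵢ⟩vᵢ − ⟨u,vᵢ⟩wᵢ` is the contraction of `Σᵢ vᵢ∧wᵢ` with the
functional `⟨u,·⟩`, so `f` maps `V` into `V⁰` and, on `V⁰`, only sees `⟨u,·⟩` restricted to `V⁰`.
If that restriction vanishes, `f` kills `V⁰ ⊇ range f`, so `f² = 0`. If it equals `ℓ u • ℓ`, then
`f x = ℓ x • z` on `V⁰`, where `z ∈ V⁰` is the contraction with `ℓ`; since `ℓ z = 0`, `f² x = 0` for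
`x ∈ V⁰`, hence `f³ = 0`.
-/

section WedgeContract

variable {R V ι : Type*} [CommRing R] [AddCommGroup V] [Module R V] [Fintype ι]

/-- The interior product `ι_ℓ (Σᵢ vᵢ∧wᵢ)` of a bivector with a linear functional. -/
def wedgeContract (ℓ : V →ₗ[R] R) (v w : ι → V) : V :=
  ∑ i, (ℓ (w i) • v i - ℓ (v i) • w i)

theorem wedgeContract_mem {V0 : Submodule R V} (ℓ : V →ₗ[R] R) {v w : ι → V}
    (hv : ∀ i, v i ∈ V0) (hw : ∀ i, w i ∈ V0) : wedgeContract ℓ v w ∈ V0 :=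
  V0.sum_mem fun i _ => V0.sub_mem (V0.smul_mem _ (hv i)) (V0.smul_mem _ (hw i))

theorem apply_wedgeContract_self (ℓ : V →ₗ[R] R) (v w : ι → V) :
    ℓ (wedgeContract ℓ v w) = 0 := by
  simp [wedgeContract, mul_comm]

theorem wedgeContract_eq_zero {ℓ : V →ₗ[R] R} {v w : ι → V}
    (hv : ∀ i, ℓ (v i) = 0) (hw : ∀ i, ℓ (w i) = 0) : wedgeContract ℓ v w = 0 := by
  simp [wedgeContract, hv, hw]

theorem wedgeContract_eq_smul {ℓ ℓ' : V →ₗ[R] R} {v w : ι → V} {c : R}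
    (hv : ∀ i, ℓ' (v i) = c * ℓ (v i)) (hw : ∀ i, ℓ' (w i) = c * ℓ (w i)) :
    wedgeContract ℓ' v w = c • wedgeContract ℓ v w := by
  simp only [wedgeContract, Finset.smul_sum, smul_sub, smul_smul, hv, hw]

end WedgeContract

theorem LinearMap.comp_comp_eq_zero_of_eq_smul {R V : Type*} [CommRing R] [AddCommGroup V]
    [Module R V] {V0 : Submodule R V} {f : V →ₗ[R] V} {ℓ : V →ₗ[R] R} {z : V}
    (hrange : ∀ u, f u ∈ V0) (hf : ∀ x ∈ V0, f x = ℓ x • z) (hz : z ∈ V0) (hℓz : ℓ z = 0) :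
    f ∘ₗ (f ∘ₗ f) = 0 := by
  ext u
  simp [hf _ (hrange u), hf z hz, hℓz]

theorem stmt7_general (V : Type*) [AddCommGroup V] [Module ℂ V]
    (B : V →ₗ[ℂ] V →ₗ[ℂ] ℂ)
    (V0 : Submodule ℂ V)
    (φ : V → V → V →ₗ[ℂ] V)
    (hφ : ∀ a b u : V, φ a b u = B u b • a - B u a • b)
    (n : ℕ) (v w : Fin n → V) (hv : ∀ i, v i ∈ V0) (hw : ∀ i, w i ∈ V0)
    (f : V →ₗ[ℂ] V) (hf : f = ∑ i, φ (v i) (w i)) :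
    ((∀ x ∈ V0, ∀ y ∈ V0, B x y = 0) → f ∘ₗ f = 0) ∧
    (∀ ℓ : V →ₗ[ℂ] ℂ, (∀ x ∈ V0, ∀ y ∈ V0, B x y = ℓ x * ℓ y) →
      (∃ x ∈ V0, ℓ x ≠ 0) → f ∘ₗ (f ∘ₗ f) = 0) := by
  have hf_apply : ∀ u, f u = wedgeContract (B u) v w := fun u => by
    simp [hf, hφ, wedgeContract]
  have hrange : ∀ u, f u ∈ V0 := fun u => hf_apply u ▸ wedgeContract_mem _ hv hw
  refine ⟨fun h0 => ?_, fun ℓ hℓ _ => ?_⟩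
  · refine LinearMap.range_le_ker_iff.mp ?_
    rintro _ ⟨u, rfl⟩
    rw [LinearMap.mem_ker, hf_apply]
    exact wedgeContract_eq_zero (fun i => h0 _ (hrange u) _ (hv i))
      (fun i => h0 _ (hrange u) _ (hw i))
  · refine LinearMap.comp_comp_eq_zero_of_eq_smul hrange (fun x hx => ?_)
      (wedgeContract_mem ℓ hv hw) (apply_wedgeContract_self ℓ v w)
    rw [hf_apply]
    exact wedgeContract_eq_smul (fun i => hℓ _ hx _ (hv i)) (fun i => hℓ _ hx _ (hw i))

/-- An element `x = Σᵢ vᵢ∧wᵢ` of `Λ²V⁰`, acting on `V` by `(a∧b)·u = ⟨u,b⟩a − ⟨u,a⟩b`,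
squares to zero if the form restricted to `V⁰` is identically zero, and cubes to zero
if the form restricted to `V⁰` has rank one. -/
theorem stmt7 (V : Type*) [AddCommGroup V] [Module ℂ V]
    (B : V →ₗ[ℂ] V →ₗ[ℂ] ℂ) (hsymm : ∀ a b : V, B a b = B b a)
    (V0 : Submodule ℂ V)
    (φ : V → V → V →ₗ[ℂ] V)
    (hφ : ∀ a b u : V, φ a b u = B u b • a - B u a • b)
    (n : ℕ) (v w : Fin n → V) (hv : ∀ i, v i ∈ V0) (hw : ∀ i, w i ∈ V0)
    (f : V →ₗ[ℂ] V) (hf : f = ∑ i, φ (v i) (w i)) :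
    ((∀ x ∈ V0, ∀ y ∈ V0, B x y = 0) → f ∘ₗ f = 0) ∧
    (∀ ℓ : V →ₗ[ℂ] ℂ, (∀ x ∈ V0, ∀ y ∈ V0, B x y = ℓ x * ℓ y) →
      (∃ x ∈ V0, ℓ x ≠ 0) → f ∘ₗ (f ∘ₗ f) = 0) :=
  stmt7_general V B V0 φ hφ n v w hv hw f hf
end

section
/- Let V, V_* be ℂ-vector spaces with a bilinear pairing, and W ⊆ V, W_* ⊆ V_* subspaces such that the restricted pairing W × W_* → ℂ has rank 1, with dim W ≥ 2 and dim W_* ≥ 2. Then the Lie algebra sl(W, W_*) := {x ∈ W ⊗ W_* : trace of x is 0} (trace of v⊗w being ⟨v,w⟩) is nilpotent of class exactly 2, i.e., [[g,g],g] = 0 but [g,g] ≠ 0. -/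
/-!
On `W ⊗ W_*` the pairing factors as `⟨v, w⟩ = ℓ v * μ w`, so the product becomes
`x · z = P x ⊗ Q z`, where `P = contractSnd μ` and `Q = contractFst ℓ`. Since `ℓ ∘ P` and
`μ ∘ Q` are both the trace, `P` and `Q` kill every commutator of trace-zero elements, and then
so does every product with such a commutator: the algebra is two-step nilpotent. It is not
abelian because `dim W, dim W_* ≥ 2` provides nonzero `v₁ ∈ W ∩ ker ℓ` and `w₁ ∈ W_* ∩ ker μ`;
with `ℓ v₀ ≠ 0 ≠ μ w₀`, the trace-zero elements `v₁ ⊗ w₀` and `v₀ ⊗ w₁` have commutator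
`ℓ v₀ μ w₀ • v₁ ⊗ w₁ ≠ 0`.
-/

open TensorProduct

theorem LinearMap.eqOn_span₂ {R M N P : Type*} [CommSemiring R] [AddCommMonoid M] [Module R M]
    [AddCommMonoid N] [Module R N] [AddCommMonoid P] [Module R P] {f g : M →ₗ[R] N →ₗ[R] P}
    {s : Set M} {t : Set N} (h : ∀ x ∈ s, ∀ y ∈ t, f x y = g x y) {x : M} {y : N}
    (hx : x ∈ Submodule.span R s) (hy : y ∈ Submodule.span R t) : f x y = g x y :=
  LinearMap.eqOn_span (fun y' hy' ↦
    LinearMap.eqOn_span (f := f.flip y') (g := g.flip y') (fun x' hx' ↦ h x' hx' y' hy') hx) hy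

theorem TensorProduct.tmul_ne_zero {K V Vs : Type*} [Field K] [AddCommGroup V] [Module K V]
    [AddCommGroup Vs] [Module K Vs] {v : V} {w : Vs} (hv : v ≠ 0) (hw : w ≠ 0) :
    v ⊗ₜ[K] w ≠ 0 := by
  obtain ⟨φ, hφ⟩ := Module.Projective.exists_dual_eq_one K hv
  obtain ⟨ψ, hψ⟩ := Module.Projective.exists_dual_eq_one K hw
  intro h
  simpa [hφ, hψ] using congrArg ((TensorProduct.lid K K).toLinearMap ∘ₗ map φ ψ) h

theorem Submodule.exists_mem_ne_zero_apply_eq_zero_of_two_le_rank {K V : Type*} [Field K]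
    [AddCommGroup V] [Module K V] (f : V →ₗ[K] K) {W : Submodule K V}
    (hW : 2 ≤ Module.rank K W) : ∃ v ∈ W, v ≠ 0 ∧ f v = 0 := by
  by_contra! h
  have hinj : Function.Injective (f ∘ₗ W.subtype) := by
    refine (injective_iff_map_eq_zero _).mpr fun u hu ↦ ?_
    by_contra hu0
    exact h u u.2 (by simpa using hu0) hu
  have := (Cardinal.lift_le.mpr hW).trans ((f ∘ₗ W.subtype).lift_rank_le_of_injective hinj)
  simp at this

namespace SlRankOne

section CommRing

variable {K V Vs : Type*} [CommRing K] [AddCommGroup V] [Module K V] [AddCommGroup Vs]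
  [Module K Vs]

abbrev tensorSpan (W : Submodule K V) (Ws : Submodule K Vs) : Submodule K (V ⊗[K] Vs) :=
  Submodule.span K {z | ∃ v ∈ W, ∃ w ∈ Ws, z = v ⊗ₜ[K] w}

theorem tmul_mem_tensorSpan {W : Submodule K V} {Ws : Submodule K Vs} {v : V} {w : Vs}
    (hv : v ∈ W) (hw : w ∈ Ws) : v ⊗ₜ[K] w ∈ tensorSpan W Ws :=
  Submodule.subset_span ⟨v, hv, w, hw, rfl⟩

def contractSnd (μ : Vs →ₗ[K] K) : V ⊗[K] Vs →ₗ[K] V :=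
  (TensorProduct.rid K V).toLinearMap ∘ₗ μ.lTensor V

def contractFst (ℓ : V →ₗ[K] K) : V ⊗[K] Vs →ₗ[K] Vs :=
  (TensorProduct.lid K Vs).toLinearMap ∘ₗ ℓ.rTensor Vs

@[simp]
theorem contractSnd_tmul (μ : Vs →ₗ[K] K) (v : V) (w : Vs) :
    contractSnd μ (v ⊗ₜ[K] w) = μ w • v := by
  simp [contractSnd]

@[simp]
theorem contractFst_tmul (ℓ : V →ₗ[K] K) (v : V) (w : Vs) :
    contractFst ℓ (v ⊗ₜ[K] w) = ℓ v • w := by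
  simp [contractFst]

variable {W : Submodule K V} {Ws : Submodule K Vs} {ℓ : V →ₗ[K] K} {μ : Vs →ₗ[K] K}
  {m : (V ⊗[K] Vs) →ₗ[K] (V ⊗[K] Vs) →ₗ[K] (V ⊗[K] Vs)} {T : (V ⊗[K] Vs) →ₗ[K] K}
  {x y z : V ⊗[K] Vs}

theorem contractSnd_mem (μ : Vs →ₗ[K] K) (hx : x ∈ tensorSpan W Ws) : contractSnd μ x ∈ W := by
  refine Submodule.span_le (p := W.comap (contractSnd μ)) |>.mpr ?_ hx
  rintro _ ⟨v, hv, w, -, rfl⟩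
  simpa using W.smul_mem _ hv

theorem contractFst_mem (ℓ : V →ₗ[K] K) (hx : x ∈ tensorSpan W Ws) : contractFst ℓ x ∈ Ws := by
  refine Submodule.span_le (p := Ws.comap (contractFst ℓ)) |>.mpr ?_ hx
  rintro _ ⟨v, -, w, hw, rfl⟩
  simpa using Ws.smul_mem _ hw

section

variable (hTW : ∀ v ∈ W, ∀ w ∈ Ws, T (v ⊗ₜ[K] w) = ℓ v * μ w)
include hTW

theorem apply_contractSnd (hx : x ∈ tensorSpan W Ws) : ℓ (contractSnd μ x) = T x :=
  LinearMap.eqOn_span (f := ℓ ∘ₗ contractSnd μ)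
    (by rintro _ ⟨v, hv, w, hw, rfl⟩; simp [hTW v hv w hw, mul_comm]) hx

theorem apply_contractFst (hx : x ∈ tensorSpan W Ws) : μ (contractFst ℓ x) = T x :=
  LinearMap.eqOn_span (f := μ ∘ₗ contractFst ℓ)
    (by rintro _ ⟨v, hv, w, hw, rfl⟩; simp [hTW v hv w hw]) hx

end

variable (hmW : ∀ v ∈ W, ∀ w ∈ Ws, ∀ v' ∈ W, ∀ w' ∈ Ws,
  m (v ⊗ₜ[K] w) (v' ⊗ₜ[K] w') = (ℓ v' * μ w) • (v ⊗ₜ[K] w'))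
include hmW

theorem mul_eq_contractSnd_tmul_contractFst (hx : x ∈ tensorSpan W Ws)
    (hz : z ∈ tensorSpan W Ws) : m x z = contractSnd μ x ⊗ₜ[K] contractFst ℓ z :=
  LinearMap.eqOn_span₂ (g := (TensorProduct.mk K V Vs).compl₁₂ (contractSnd μ) (contractFst ℓ))
    (by
      rintro _ ⟨v, hv, w, hw, rfl⟩ _ ⟨v', hv', w', hw', rfl⟩
      simp [hmW v hv w hw v' hv' w' hw', mul_smul, smul_tmul']) hx hz

theorem commutator_mem_tensorSpan (hx : x ∈ tensorSpan W Ws) (hy : y ∈ tensorSpan W Ws) :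
    m x y - m y x ∈ tensorSpan W Ws := by
  rw [mul_eq_contractSnd_tmul_contractFst hmW hx hy, mul_eq_contractSnd_tmul_contractFst hmW hy hx]
  exact sub_mem (tmul_mem_tensorSpan (contractSnd_mem μ hx) (contractFst_mem ℓ hy))
    (tmul_mem_tensorSpan (contractSnd_mem μ hy) (contractFst_mem ℓ hx))

variable (hTW : ∀ v ∈ W, ∀ w ∈ Ws, T (v ⊗ₜ[K] w) = ℓ v * μ w)
include hTW

theorem contractSnd_commutator_eq_zero (hx : x ∈ tensorSpan W Ws) (hy : y ∈ tensorSpan W Ws)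
    (hTx : T x = 0) (hTy : T y = 0) : contractSnd μ (m x y - m y x) = 0 := by
  rw [mul_eq_contractSnd_tmul_contractFst hmW hx hy, mul_eq_contractSnd_tmul_contractFst hmW hy hx,
    map_sub, contractSnd_tmul, contractSnd_tmul, apply_contractFst hTW hx,
    apply_contractFst hTW hy, hTx, hTy, zero_smul, zero_smul, sub_zero]

theorem contractFst_commutator_eq_zero (hx : x ∈ tensorSpan W Ws) (hy : y ∈ tensorSpan W Ws)
    (hTx : T x = 0) (hTy : T y = 0) : contractFst ℓ (m x y - m y x) = 0 := by
  rw [mul_eq_contractSnd_tmul_contractFst hmW hx hy, mul_eq_contractSnd_tmul_contractFst hmW hy hx,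
    map_sub, contractFst_tmul, contractFst_tmul, apply_contractSnd hTW hx,
    apply_contractSnd hTW hy, hTx, hTy, zero_smul, zero_smul, sub_zero]

theorem commutator_commutator_eq_zero (hx : x ∈ tensorSpan W Ws) (hy : y ∈ tensorSpan W Ws)
    (hz : z ∈ tensorSpan W Ws) (hTx : T x = 0) (hTy : T y = 0) :
    m (m x y - m y x) z - m z (m x y - m y x) = 0 := by
  have hc := commutator_mem_tensorSpan hmW hx hy
  rw [mul_eq_contractSnd_tmul_contractFst hmW hc hz, mul_eq_contractSnd_tmul_contractFst hmW hz hc,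
    contractSnd_commutator_eq_zero hmW hTW hx hy hTx hTy,
    contractFst_commutator_eq_zero hmW hTW hx hy hTx hTy, zero_tmul, tmul_zero, sub_zero]

end CommRing

section Field

variable {K V Vs : Type*} [Field K] [AddCommGroup V] [Module K V] [AddCommGroup Vs]
  [Module K Vs] {W : Submodule K V} {Ws : Submodule K Vs} {ℓ : V →ₗ[K] K} {μ : Vs →ₗ[K] K}
  {m : (V ⊗[K] Vs) →ₗ[K] (V ⊗[K] Vs) →ₗ[K] (V ⊗[K] Vs)} {T : (V ⊗[K] Vs) →ₗ[K] K}

theorem exists_commutator_ne_zero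
    (hmW : ∀ v ∈ W, ∀ w ∈ Ws, ∀ v' ∈ W, ∀ w' ∈ Ws,
      m (v ⊗ₜ[K] w) (v' ⊗ₜ[K] w') = (ℓ v' * μ w) • (v ⊗ₜ[K] w'))
    (hTW : ∀ v ∈ W, ∀ w ∈ Ws, T (v ⊗ₜ[K] w) = ℓ v * μ w)
    (hℓ : ∃ v ∈ W, ℓ v ≠ 0) (hμ : ∃ w ∈ Ws, μ w ≠ 0)
    (hdW : 2 ≤ Module.rank K W) (hdWs : 2 ≤ Module.rank K Ws) :
    ∃ x ∈ tensorSpan W Ws, T x = 0 ∧ ∃ y ∈ tensorSpan W Ws, T y = 0 ∧ m x y - m y x ≠ 0 := by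
  obtain ⟨v₀, hv₀, hℓv₀⟩ := hℓ
  obtain ⟨w₀, hw₀, hμw₀⟩ := hμ
  obtain ⟨v₁, hv₁, hv₁0, hℓv₁⟩ := W.exists_mem_ne_zero_apply_eq_zero_of_two_le_rank ℓ hdW
  obtain ⟨w₁, hw₁, hw₁0, hμw₁⟩ := Ws.exists_mem_ne_zero_apply_eq_zero_of_two_le_rank μ hdWs
  refine ⟨v₁ ⊗ₜ w₀, tmul_mem_tensorSpan hv₁ hw₀, by simp [hTW v₁ hv₁ w₀ hw₀, hℓv₁],
    v₀ ⊗ₜ w₁, tmul_mem_tensorSpan hv₀ hw₁, by simp [hTW v₀ hv₀ w₁ hw₁, hμw₁], ?_⟩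
  rw [hmW v₁ hv₁ w₀ hw₀ v₀ hv₀ w₁ hw₁, hmW v₀ hv₀ w₁ hw₁ v₁ hv₁ w₀ hw₀, hℓv₁, hμw₁]
  simpa [hℓv₀, hμw₀] using tmul_ne_zero hv₁0 hw₁0

end Field

end SlRankOne

/-- If the pairing restricted to `W × W_*` has rank exactly 1 and `dim W ≥ 2`,
`dim W_* ≥ 2`, then `sl(W, W_*)` (trace-zero elements of `W ⊗ W_*`) is nilpotent of
class exactly 2. -/
theorem stmt9 (V Vs : Type*) [AddCommGroup V] [Module ℂ V] [AddCommGroup Vs] [Module ℂ Vs]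
    (B : V →ₗ[ℂ] Vs →ₗ[ℂ] ℂ)
    (W : Submodule ℂ V) (Ws : Submodule ℂ Vs)
    (m : (V ⊗[ℂ] Vs) →ₗ[ℂ] (V ⊗[ℂ] Vs) →ₗ[ℂ] (V ⊗[ℂ] Vs))
    (hm : ∀ (v : V) (w : Vs) (v' : V) (w' : Vs),
      m (v ⊗ₜ[ℂ] w) (v' ⊗ₜ[ℂ] w') = B v' w • (v ⊗ₜ[ℂ] w'))
    (T : (V ⊗[ℂ] Vs) →ₗ[ℂ] ℂ) (hT : ∀ (v : V) (w : Vs), T (v ⊗ₜ[ℂ] w) = B v w)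
    (ℓ : V →ₗ[ℂ] ℂ) (μ : Vs →ₗ[ℂ] ℂ)
    (hrank : ∀ v ∈ W, ∀ w ∈ Ws, B v w = ℓ v * μ w)
    (hℓ : ∃ v ∈ W, ℓ v ≠ 0) (hμ : ∃ w ∈ Ws, μ w ≠ 0)
    (hdW : 2 ≤ Module.rank ℂ W) (hdWs : 2 ≤ Module.rank ℂ Ws) :
    (∀ x ∈ Submodule.span ℂ {z : V ⊗[ℂ] Vs | ∃ v ∈ W, ∃ w ∈ Ws, z = v ⊗ₜ[ℂ] w},
      T x = 0 →
     ∀ y ∈ Submodule.span ℂ {z : V ⊗[ℂ] Vs | ∃ v ∈ W, ∃ w ∈ Ws, z = v ⊗ₜ[ℂ] w},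
      T y = 0 →
     ∀ z ∈ Submodule.span ℂ {z : V ⊗[ℂ] Vs | ∃ v ∈ W, ∃ w ∈ Ws, z = v ⊗ₜ[ℂ] w},
      T z = 0 →
        m (m x y - m y x) z - m z (m x y - m y x) = 0) ∧
    (∃ x ∈ Submodule.span ℂ {z : V ⊗[ℂ] Vs | ∃ v ∈ W, ∃ w ∈ Ws, z = v ⊗ₜ[ℂ] w},
      T x = 0 ∧
     ∃ y ∈ Submodule.span ℂ {z : V ⊗[ℂ] Vs | ∃ v ∈ W, ∃ w ∈ Ws, z = v ⊗ₜ[ℂ] w},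
      T y = 0 ∧ m x y - m y x ≠ 0) := by
  have hmW : ∀ v ∈ W, ∀ w ∈ Ws, ∀ v' ∈ W, ∀ w' ∈ Ws,
      m (v ⊗ₜ[ℂ] w) (v' ⊗ₜ[ℂ] w') = (ℓ v' * μ w) • (v ⊗ₜ[ℂ] w') :=
    fun v _ w hw v' hv' w' _ ↦ by rw [hm, hrank v' hv' w hw]
  have hTW : ∀ v ∈ W, ∀ w ∈ Ws, T (v ⊗ₜ[ℂ] w) = ℓ v * μ w :=
    fun v hv w hw ↦ by rw [hT, hrank v hv w hw]
  exact ⟨fun x hx hTx y hy hTy z hz _ ↦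
      SlRankOne.commutator_commutator_eq_zero hmW hTW hx hy hz hTx hTy,
    SlRankOne.exists_commutator_ne_zero hmW hTW hℓ hμ hdW hdWs⟩
end

section
/- Let X and Y be finite-dimensional ℂ-vector spaces and let λᵢ : X → ℂ, μᵢ : Y → ℂ (i ∈ ℕ) be sequences of linear functionals. Define X₀ := {x ∈ X : λᵢ(x) = 0 for all but finitely many i} and Y₀ similarly. Let ω : X × Y → ℂ be bilinear and define ω̃ on X₀ × Y (and X × Y₀) by ω̃(x,y) = ω(x,y) − Σᵢ λᵢ(x)μᵢ(y) (a finite sum). Suppose nondegeneracy: for every nonzero x₀ ∈ X₀ there is y ∈ Y with ω̃(x₀,y) ≠ 0, and for every nonzero y₀ ∈ Y₀ there is x ∈ X with ω̃(x,y₀) ≠ 0. Then dim(X/X₀) ≥ dim Y₀ − rank(ω̃|_{X₀×Y₀}) and dim(Y/Y₀) ≥ dim X₀ − rank(ω̃|_{X₀×Y₀}). -/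
open Module LinearMap

private lemma stmt13rankflip {V W : Type*} [AddCommGroup V] [Module ℂ V] [FiniteDimensional ℂ V]
    [AddCommGroup W] [Module ℂ W] [FiniteDimensional ℂ W] (B : V →ₗ[ℂ] W →ₗ[ℂ] ℂ) :
    Module.finrank ℂ (LinearMap.range B.flip) = Module.finrank ℂ (LinearMap.range B) := by
  rw [← LinearMap.dualAnnihilator_ker_eq_range_flip,
    ← LinearEquiv.finrank_eq (Submodule.dualQuotEquivDualAnnihilator (LinearMap.ker B)),
    Subspace.dual_finrank_eq]
  exact LinearEquiv.finrank_eq B.quotKerEquivRange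

private lemma stmt13aux (X Y : Type*) [AddCommGroup X] [Module ℂ X] [FiniteDimensional ℂ X]
    [AddCommGroup Y] [Module ℂ Y] [FiniteDimensional ℂ Y]
    (lam : ℕ → X →ₗ[ℂ] ℂ) (mu : ℕ → Y →ₗ[ℂ] ℂ)
    (X0 : Submodule ℂ X) (Y0 : Submodule ℂ Y)
    (hY0 : ∀ y : Y, y ∈ Y0 ↔ {i : ℕ | mu i y ≠ 0}.Finite)
    (ω : X →ₗ[ℂ] Y →ₗ[ℂ] ℂ)
    (ωt : X → Y → ℂ) (hωt : ∀ x y, ωt x y = ω x y - ∑ᶠ i, lam i x * mu i y)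
    (hnd2 : ∀ y ∈ Y0, y ≠ 0 → ∃ x : X, ωt x y ≠ 0)
    (T : ↥X0 →ₗ[ℂ] ↥Y0 →ₗ[ℂ] ℂ) (hT : ∀ (x : X0) (y : Y0), T x y = ωt x y) :
    Module.finrank ℂ Y0 - Module.finrank ℂ (LinearMap.range T)
        ≤ Module.finrank ℂ (X ⧸ X0) := by
  classical
  -- the support of `i ↦ lam i x * mu i y` is finite for `y ∈ Y0`
  have hsupp : ∀ (x : X) (y : Y), y ∈ Y0 →
      (Function.support fun i => lam i x * mu i y).Finite := by
    intro x y hy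
    refine ((hY0 y).mp hy).subset ?_
    intro i hi
    simp only [Function.mem_support] at hi
    simp only [Set.mem_setOf_eq]
    intro h
    exact hi (by rw [h, mul_zero])
  -- the linear form `x ↦ ωt x y` for `y ∈ Y0`
  set ψ : ↥Y0 → (X →ₗ[ℂ] ℂ) := fun y =>
    ω.flip y.1 - ∑ i ∈ ((hY0 y.1).mp y.2).toFinset, (mu i y.1) • lam i with hψdef
  have hψ : ∀ (y : ↥Y0) (x : X), ψ y x = ωt x y.1 := by
    intro y x
    have hs : (Function.support fun i => lam i x * mu i y.1)
        ⊆ ((hY0 y.1).mp y.2).toFinset := by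
      intro i hi
      simp only [Function.mem_support] at hi
      simp only [Finset.coe_sort_coe, Set.Finite.coe_toFinset, Set.mem_setOf_eq]
      intro h
      exact hi (by rw [h, mul_zero])
    rw [hωt x y.1, finsum_eq_sum_of_support_subset _ hs]
    simp only [hψdef, LinearMap.sub_apply, LinearMap.coe_sum, Finset.sum_apply,
      LinearMap.smul_apply, smul_eq_mul, LinearMap.flip_apply]
    rw [Finset.sum_congr rfl (fun i _ => mul_comm (mu i y.1) (lam i x))]
  -- additivity of `ωt` in the second variable on `Y0`
  have hadd : ∀ (x : X) (y y' : Y), y ∈ Y0 → y' ∈ Y0 →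
      ωt x (y + y') = ωt x y + ωt x y' := by
    intro x y y' hy hy'
    rw [hωt, hωt, hωt]
    have hcong : ∀ i, lam i x * mu i (y + y')
        = lam i x * mu i y + lam i x * mu i y' := by
      intro i; rw [map_add]; ring
    rw [finsum_congr hcong, finsum_add_distrib (hsupp x y hy) (hsupp x y' hy'), map_add]
    ring
  have hsmul : ∀ (x : X) (c : ℂ) (y : Y), ωt x (c • y) = c * ωt x y := by
    intro x c y
    rw [hωt, hωt]
    have hcong : ∀ i, lam i x * mu i (c • y) = c • (lam i x * mu i y) := by
      intro i; rw [map_smul]; simp [smul_eq_mul]; ring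
    rw [finsum_congr hcong, ← smul_finsum, map_smul]
    simp only [smul_eq_mul]
    ring
  set K := LinearMap.ker T.flip with hK
  have hker : ∀ (y : ↥K) (x : X), x ∈ X0 → ψ y.1 x = 0 := by
    intro y x hx
    rw [hψ y.1 x, ← hT ⟨x, hx⟩ y.1]
    have h0 : T.flip y.1 = 0 := y.2
    have : T ⟨x, hx⟩ y.1 = T.flip y.1 ⟨x, hx⟩ := rfl
    rw [this, h0]
    rfl
  -- the injection `K → (X ⧸ X0)*`
  let g : ↥K →ₗ[ℂ] Module.Dual ℂ (X ⧸ X0) :=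
    { toFun := fun y => X0.liftQ (ψ y.1) (fun x hx => LinearMap.mem_ker.mpr (hker y x hx))
      map_add' := by
        intro y y'
        refine LinearMap.ext fun q => ?_
        obtain ⟨x, rfl⟩ := Submodule.Quotient.mk_surjective X0 q
        simp only [Submodule.liftQ_apply, LinearMap.add_apply]
        rw [hψ, hψ, hψ]
        have : (((y + y').1 : ↥Y0) : Y) = (y.1 : Y) + (y'.1 : Y) := rfl
        rw [this]
        exact hadd x y.1 y'.1 y.1.2 y'.1.2
      map_smul' := by
        intro c y
        refine LinearMap.ext fun q => ?_
        obtain ⟨x, rfl⟩ := Submodule.Quotient.mk_surjective X0 q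
        simp only [Submodule.liftQ_apply, LinearMap.smul_apply, RingHom.id_apply]
        rw [hψ, hψ]
        have : (((c • y).1 : ↥Y0) : Y) = c • (y.1 : Y) := rfl
        rw [this, hsmul x c y.1]
        simp [smul_eq_mul] }
  have hginj : Function.Injective g := by
    rw [← LinearMap.ker_eq_bot, LinearMap.ker_eq_bot']
    intro y hy0
    by_contra hne
    have hyne : ((y.1 : ↥Y0) : Y) ≠ 0 := by
      intro h
      apply hne
      ext
      exact h
    obtain ⟨x, hx⟩ := hnd2 y.1.1 y.1.2 hyne
    apply hx
    rw [← hψ y.1 x]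
    have : ψ y.1 x = g y (Submodule.Quotient.mk x) := rfl
    rw [this, hy0]
    rfl
  have h1 : Module.finrank ℂ ↥K ≤ Module.finrank ℂ (X ⧸ X0) := by
    have := LinearMap.finrank_le_finrank_of_injective hginj
    rwa [Subspace.dual_finrank_eq] at this
  have h3 := LinearMap.finrank_range_add_finrank_ker T.flip
  rw [← hK] at h3
  have h4 := stmt13rankflip T
  omega

/-- Nondegeneracy of a complement datum forces the dimension inequalities
`dim(X/X₀) ≥ dim Y₀ − rank(ω̃|_{X₀×Y₀})` and `dim(Y/Y₀) ≥ dim X₀ − rank(ω̃|_{X₀×Y₀})`. -/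
theorem stmt13 (X Y : Type*) [AddCommGroup X] [Module ℂ X] [FiniteDimensional ℂ X]
    [AddCommGroup Y] [Module ℂ Y] [FiniteDimensional ℂ Y]
    (lam : ℕ → X →ₗ[ℂ] ℂ) (mu : ℕ → Y →ₗ[ℂ] ℂ)
    (X0 : Submodule ℂ X) (hX0 : ∀ x : X, x ∈ X0 ↔ {i : ℕ | lam i x ≠ 0}.Finite)
    (Y0 : Submodule ℂ Y) (hY0 : ∀ y : Y, y ∈ Y0 ↔ {i : ℕ | mu i y ≠ 0}.Finite)
    (ω : X →ₗ[ℂ] Y →ₗ[ℂ] ℂ)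
    (ωt : X → Y → ℂ) (hωt : ∀ x y, ωt x y = ω x y - ∑ᶠ i, lam i x * mu i y)
    (hnd1 : ∀ x ∈ X0, x ≠ 0 → ∃ y : Y, ωt x y ≠ 0)
    (hnd2 : ∀ y ∈ Y0, y ≠ 0 → ∃ x : X, ωt x y ≠ 0)
    (T : ↥X0 →ₗ[ℂ] ↥Y0 →ₗ[ℂ] ℂ) (hT : ∀ (x : X0) (y : Y0), T x y = ωt x y) :
    Module.finrank ℂ Y0 - Module.finrank ℂ (LinearMap.range T)
        ≤ Module.finrank ℂ (X ⧸ X0) ∧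
    Module.finrank ℂ X0 - Module.finrank ℂ (LinearMap.range T)
        ≤ Module.finrank ℂ (Y ⧸ Y0) := by
  constructor
  · exact stmt13aux X Y lam mu X0 Y0 hY0 ω ωt hωt hnd2 T hT
  · have hωt' : ∀ y x, (fun (y : Y) (x : X) => ωt x y) y x
        = ω.flip y x - ∑ᶠ i, mu i y * lam i x := by
      intro y x
      show ωt x y = _
      rw [hωt x y, LinearMap.flip_apply]
      congr 1
      exact finsum_congr fun i => mul_comm _ _
    have h := stmt13aux Y X mu lam Y0 X0 hX0 ω.flip (fun y x => ωt x y) hωt' hnd1 T.flip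
      (fun y x => hT x y)
    rwa [stmt13rankflip T] at h
end

section
/- Let d, p, q, m, n be natural numbers with 0 ≤ p − d ≤ n and 0 ≤ q − d ≤ m (i.e. d ≤ p ≤ n + d and d ≤ q ≤ m + d). Then there exists a nondegenerate complement datum (X, Y, ω, (λᵢ), (μᵢ)) for gl_∞ with dim X₀ = p, dim Y₀ = q, dim X/X₀ = m, dim Y/Y₀ = n, and rank(ω̃|_{X₀×Y₀}) = d. -/
/-!
Take `X = K^{p+m}` with `X₀` spanned by the first `p` coordinates and `λᵢ` the coordinate
`p + (i mod m)`, so that `X₀` is exactly where almost all `λᵢ` vanish and `ω̃ = ω` on `X₀ × Y`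
and on `X × Y₀`; likewise for `Y = K^{q+n}`. For `ω` take the form of a partial permutation
matrix matching every coordinate of `X₀` with one of `Y` and every coordinate of `Y₀` with one
of `X`, exactly `d` of the matched pairs lying in `X₀ × Y₀`. Such a matching exists precisely
when `d ≤ p ≤ n + d` and `d ≤ q ≤ m + d`, and then `ω̃|_{X₀×Y₀}` is the standard dot product on
the first `d` coordinates, of rank `d`.
-/

open Function LinearMap

namespace ComplementDatum

variable {K : Type*} [Field K]

section Head

variable (K) in
noncomputable def headSubspace (p m : ℕ) : Submodule K (Fin (p + m) → K) :=
  ker (funLeft K K (Fin.natAdd p))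

variable (K) in
noncomputable def tailCoord (p m i : ℕ) : (Fin (p + m) → K) →ₗ[K] K :=
  if hm : m = 0 then 0
  else proj (Fin.natAdd p ⟨i % m, Nat.mod_lt i (Nat.pos_of_ne_zero hm)⟩)

variable {p m : ℕ}

lemma mem_headSubspace {x : Fin (p + m) → K} :
    x ∈ headSubspace K p m ↔ ∀ j : Fin m, x (Fin.natAdd p j) = 0 := by
  simp [headSubspace, funext_iff, funLeft_apply]

lemma apply_eq_zero_of_mem_headSubspace {x : Fin (p + m) → K} (hx : x ∈ headSubspace K p m)
    {i : Fin (p + m)} (hi : p ≤ i) : x i = 0 := by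
  have h := mem_headSubspace.mp hx ⟨i - p, by omega⟩
  rwa [show Fin.natAdd p ⟨i - p, _⟩ = i from Fin.ext (by simp; omega)] at h

lemma exists_apply_ne_zero_of_mem_headSubspace {x : Fin (p + m) → K}
    (hx : x ∈ headSubspace K p m) (hx0 : x ≠ 0) : ∃ i : Fin (p + m), (i : ℕ) < p ∧ x i ≠ 0 := by
  obtain ⟨i, hi⟩ := Function.ne_iff.mp hx0
  exact ⟨i, not_le.mp fun hpi => hi (apply_eq_zero_of_mem_headSubspace hx hpi), hi⟩

lemma tailCoord_apply_of_mod_eq {i : ℕ} {j : Fin m} (hij : i % m = j) (x : Fin (p + m) → K) :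
    tailCoord K p m i x = x (Fin.natAdd p j) := by
  have hm : m ≠ 0 := by have := j.isLt; omega
  simp [tailCoord, hm, hij]

lemma tailCoord_eq_zero_of_mem {x : Fin (p + m) → K} (hx : x ∈ headSubspace K p m) (i : ℕ) :
    tailCoord K p m i x = 0 := by
  rcases eq_or_ne m 0 with hm | hm
  · simp [tailCoord, hm]
  · rw [tailCoord_apply_of_mod_eq (j := ⟨i % m, Nat.mod_lt i (Nat.pos_of_ne_zero hm)⟩) rfl]
    exact mem_headSubspace.mp hx _

lemma mem_headSubspace_iff_finite (x : Fin (p + m) → K) :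
    x ∈ headSubspace K p m ↔ {i : ℕ | tailCoord K p m i x ≠ 0}.Finite := by
  refine ⟨fun hx => by simp [tailCoord_eq_zero_of_mem hx], fun hfin => ?_⟩
  by_contra hx
  obtain ⟨j, hj⟩ : ∃ j : Fin m, x (Fin.natAdd p j) ≠ 0 := by
    simpa [mem_headSubspace] using hx
  have hinf : {i : ℕ | i % m = j}.Infinite :=
    Nat.frequently_atTop_iff_infinite.mp (Nat.frequently_mod_eq j.isLt)
  exact hinf (hfin.subset fun i hi => by rwa [Set.mem_ofPred_eq, tailCoord_apply_of_mod_eq hi])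

lemma finsum_tailCoord_mul_eq_zero_of_mem_left {q n : ℕ} {x : Fin (p + m) → K}
    (hx : x ∈ headSubspace K p m) (y : Fin (q + n) → K) :
    ∑ᶠ i, tailCoord K p m i x * tailCoord K q n i y = 0 := by
  simp [tailCoord_eq_zero_of_mem hx]

lemma finsum_tailCoord_mul_eq_zero_of_mem_right {q n : ℕ} (x : Fin (p + m) → K)
    {y : Fin (q + n) → K} (hy : y ∈ headSubspace K q n) :
    ∑ᶠ i, tailCoord K p m i x * tailCoord K q n i y = 0 := by
  simp [tailCoord_eq_zero_of_mem hy]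

lemma surjective_funLeft_natAdd : Surjective (funLeft K K (Fin.natAdd (m := m) p)) :=
  funLeft_surjective_of_injective K K _ (Fin.natAdd_injective m p)

lemma finrank_quotient_headSubspace :
    Module.finrank K ((Fin (p + m) → K) ⧸ headSubspace K p m) = m :=
  ((funLeft K K (Fin.natAdd p)).quotKerEquivOfSurjective
    surjective_funLeft_natAdd).finrank_eq.trans (Module.finrank_fin_fun K)

lemma finrank_headSubspace : Module.finrank K (headSubspace K p m) = p := by
  have := (headSubspace K p m).finrank_quotient_add_finrank
  rw [finrank_quotient_headSubspace, Module.finrank_fin_fun] at this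
  omega

noncomputable def headRestrict {d : ℕ} (hdp : d ≤ p) : headSubspace K p m →ₗ[K] (Fin d → K) :=
  funLeft K K (Fin.castLE (hdp.trans (Nat.le_add_right p m))) ∘ₗ (headSubspace K p m).subtype

lemma headRestrict_surjective {d : ℕ} (hdp : d ≤ p) :
    Surjective (headRestrict (K := K) (m := m) hdp) := by
  intro c
  let x : Fin (p + m) → K := fun i => if h : (i : ℕ) < d then c ⟨i, h⟩ else 0
  have hx : x ∈ headSubspace K p m :=
    mem_headSubspace.mpr fun j => dif_neg (by simp; omega)
  exact ⟨⟨x, hx⟩, funext fun k => by simp [headRestrict, x, funLeft_apply]⟩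

end Head

section Pairing

variable {ι α β : Type*} [Fintype ι]

variable (K) in
noncomputable def matchingPairing (a : ι → α) (b : ι → β) : (α → K) →ₗ[K] (β → K) →ₗ[K] K :=
  (dotProductBilin K K).compl₁₂ (funLeft K K a) (funLeft K K b)

lemma matchingPairing_apply (a : ι → α) (b : ι → β) (x : α → K) (y : β → K) :
    matchingPairing K a b x y = ∑ k, x (a k) * y (b k) := rfl

lemma matchingPairing_single_right [DecidableEq β] (a : ι → α) {b : ι → β}
    (hb : Injective b) (x : α → K) (k : ι) :
    matchingPairing K a b x (Pi.single (b k) 1) = x (a k) := by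
  classical
  simp [matchingPairing_apply, Pi.single_apply, hb.eq_iff]

lemma matchingPairing_single_left [DecidableEq α] {a : ι → α} (ha : Injective a)
    (b : ι → β) (y : β → K) (k : ι) :
    matchingPairing K a b (Pi.single (a k) 1) y = y (b k) := by
  classical
  simp [matchingPairing_apply, Pi.single_apply, ha.eq_iff]

lemma finrank_range_dotProductBilin_compl₁₂ {U W : Type*} [AddCommGroup U] [Module K U]
    [AddCommGroup W] [Module K W] {f : U →ₗ[K] (ι → K)} {g : W →ₗ[K] (ι → K)}
    (hf : Surjective f) (hg : Surjective g) :
    Module.finrank K (range ((dotProductBilin K K).compl₁₂ f g)) = Fintype.card ι := by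
  have hinj : Injective ((dotProductBilin K K).compl₂ g) := by
    refine (injective_iff_map_eq_zero _).mpr fun c hc => dotProduct_eq_zero c fun v => ?_
    obtain ⟨w, rfl⟩ := hg v
    exact LinearMap.congr_fun hc w
  change Module.finrank K (range (((dotProductBilin K K).compl₂ g) ∘ₗ f)) = _
  rw [range_comp_of_range_eq_top _ (range_eq_top.mpr hf), finrank_range_of_inj hinj,
    Module.finrank_fintype_fun_eq_card]

end Pairing

section Standard

variable {d p q m n : ℕ}

/- `ω` is the pairing along `k ↦ partner k`: the first `d` pairs lie in `X₀ × Y₀` (giving the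
rank `d`), the next `p - d` pair `X₀` with the tail of `Y`, the last `q - d` pair the tail of `X`
with `Y₀`. -/
def partner (h2 : p ≤ n + d) (h3 : d ≤ q) (k : Fin (p + (q - d))) : Fin (q + n) :=
  ⟨if (k : ℕ) < d then k else if (k : ℕ) < p then q + (k - d) else d + (k - p), by
    have := k.isLt
    split_ifs <;> omega⟩

lemma partner_injective (h2 : p ≤ n + d) (h3 : d ≤ q) : Injective (partner h2 h3) := by
  intro k l hkl
  have hkl := congrArg Fin.val hkl
  simp only [partner] at hkl
  have := k.isLt
  have := l.isLt
  exact Fin.ext (by split_ifs at hkl <;> omega)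

lemma exists_partner_eq (h1 : d ≤ p) (h2 : p ≤ n + d) (h3 : d ≤ q) {j : Fin (q + n)}
    (hj : (j : ℕ) < q) : ∃ k, partner h2 h3 k = j := by
  by_cases hjd : (j : ℕ) < d
  · exact ⟨⟨j, by omega⟩, Fin.ext (by simp [partner, hjd])⟩
  · refine ⟨⟨p + (j - d), by omega⟩, Fin.ext ?_⟩
    simp only [partner]
    split_ifs <;> omega

variable (K) in
noncomputable def standardPairing (h2 : p ≤ n + d) (h3 : d ≤ q) (h4 : q ≤ m + d) :
    (Fin (p + m) → K) →ₗ[K] (Fin (q + n) → K) →ₗ[K] K :=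
  matchingPairing K (Fin.castLE (by omega : p + (q - d) ≤ p + m)) (partner h2 h3)

lemma standardPairing_nondegenerate_left (h2 : p ≤ n + d) (h3 : d ≤ q) (h4 : q ≤ m + d)
    {x : Fin (p + m) → K} (hx : x ∈ headSubspace K p m) (hx0 : x ≠ 0) :
    ∃ y, standardPairing K h2 h3 h4 x y ≠ 0 := by
  obtain ⟨i, hip, hi⟩ := exists_apply_ne_zero_of_mem_headSubspace hx hx0
  refine ⟨Pi.single (partner h2 h3 ⟨i, by omega⟩) 1, ?_⟩
  rwa [standardPairing, matchingPairing_single_right _ (partner_injective h2 h3)]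

lemma standardPairing_nondegenerate_right (h1 : d ≤ p) (h2 : p ≤ n + d) (h3 : d ≤ q)
    (h4 : q ≤ m + d) {y : Fin (q + n) → K} (hy : y ∈ headSubspace K q n) (hy0 : y ≠ 0) :
    ∃ x, standardPairing K h2 h3 h4 x y ≠ 0 := by
  obtain ⟨j, hjq, hj⟩ := exists_apply_ne_zero_of_mem_headSubspace hy hy0
  obtain ⟨k, rfl⟩ := exists_partner_eq h1 h2 h3 hjq
  exact ⟨Pi.single (Fin.castLE _ k) 1, by
    rwa [standardPairing, matchingPairing_single_left (Fin.castLE_injective _)]⟩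

lemma domRestrict₁₂_standardPairing (h1 : d ≤ p) (h2 : p ≤ n + d) (h3 : d ≤ q)
    (h4 : q ≤ m + d) :
    (standardPairing K h2 h3 h4).domRestrict₁₂ (headSubspace K p m) (headSubspace K q n) =
      (dotProductBilin K K).compl₁₂ (headRestrict h1) (headRestrict h3) := by
  ext x y
  simp only [domRestrict₁₂_apply, standardPairing, matchingPairing_apply, compl₁₂_apply,
    dotProductBilin_apply_apply, dotProduct, headRestrict, coe_comp, comp_apply,
    Submodule.coe_subtype, funLeft_apply]
  -- only the pairs `k < d` survive on `X₀ × Y₀`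
  refine (Fintype.sum_of_injective (Fin.castLE (by omega)) (Fin.castLE_injective _) _ _
    (fun k hk => ?_) (fun k => ?_)).symm
  · have hdk : d ≤ (k : ℕ) := not_lt.mp fun hkd => hk ⟨⟨k, hkd⟩, rfl⟩
    by_cases hkp : (k : ℕ) < p
    · refine mul_eq_zero_of_right _ (apply_eq_zero_of_mem_headSubspace y.2 ?_)
      simp only [partner]
      split_ifs <;> omega
    · exact mul_eq_zero_of_left (apply_eq_zero_of_mem_headSubspace x.2 (by simpa using hkp)) _
  · refine congrArg (fun i => _ * (y : Fin (q + n) → K) i) (Fin.ext ?_)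
    simp only [partner, Fin.val_castLE, if_pos k.isLt]

end Standard

end ComplementDatum

open ComplementDatum in
/-- Existence of a nondegenerate complement datum for `gl_∞` with prescribed standard
invariants `(d, p, q, m, n)` whenever `d ≤ p ≤ n + d` and `d ≤ q ≤ m + d`.
The underlying spaces are taken to be `ℂ^{p+m}` and `ℂ^{q+n}`. -/
theorem stmt14 (d p q m n : ℕ) (h1 : d ≤ p) (h2 : p ≤ n + d) (h3 : d ≤ q) (h4 : q ≤ m + d) :
    ∃ (lam : ℕ → (Fin (p + m) → ℂ) →ₗ[ℂ] ℂ) (mu : ℕ → (Fin (q + n) → ℂ) →ₗ[ℂ] ℂ)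
      (ω : (Fin (p + m) → ℂ) →ₗ[ℂ] (Fin (q + n) → ℂ) →ₗ[ℂ] ℂ)
      (X0 : Submodule ℂ (Fin (p + m) → ℂ)) (Y0 : Submodule ℂ (Fin (q + n) → ℂ))
      (T : ↥X0 →ₗ[ℂ] ↥Y0 →ₗ[ℂ] ℂ),
      (∀ x, x ∈ X0 ↔ {i : ℕ | lam i x ≠ 0}.Finite) ∧
      (∀ y, y ∈ Y0 ↔ {i : ℕ | mu i y ≠ 0}.Finite) ∧
      (∀ (x : X0) (y : Y0),
        T x y = ω (x : Fin (p + m) → ℂ) (y : Fin (q + n) → ℂ)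
          - ∑ᶠ i, lam i (x : Fin (p + m) → ℂ) * mu i (y : Fin (q + n) → ℂ)) ∧
      (∀ x ∈ X0, x ≠ 0 → ∃ y : Fin (q + n) → ℂ,
        ω x y - ∑ᶠ i, lam i x * mu i y ≠ 0) ∧
      (∀ y ∈ Y0, y ≠ 0 → ∃ x : Fin (p + m) → ℂ,
        ω x y - ∑ᶠ i, lam i x * mu i y ≠ 0) ∧
      Module.finrank ℂ X0 = p ∧ Module.finrank ℂ Y0 = q ∧
      Module.finrank ℂ ((Fin (p + m) → ℂ) ⧸ X0) = m ∧
      Module.finrank ℂ ((Fin (q + n) → ℂ) ⧸ Y0) = n ∧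
      Module.finrank ℂ (LinearMap.range T) = d := by
  let ω := standardPairing ℂ h2 h3 h4
  refine ⟨tailCoord ℂ p m, tailCoord ℂ q n, ω, headSubspace ℂ p m, headSubspace ℂ q n,
    ω.domRestrict₁₂ _ _, mem_headSubspace_iff_finite, mem_headSubspace_iff_finite,
    fun x y => ?_, fun x hx hx0 => ?_, fun y hy hy0 => ?_, finrank_headSubspace,
    finrank_headSubspace, finrank_quotient_headSubspace, finrank_quotient_headSubspace, ?_⟩
  · rw [finsum_tailCoord_mul_eq_zero_of_mem_left x.2, sub_zero, domRestrict₁₂_apply]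
  · simpa [finsum_tailCoord_mul_eq_zero_of_mem_left hx]
      using standardPairing_nondegenerate_left h2 h3 h4 hx hx0
  · simpa [finsum_tailCoord_mul_eq_zero_of_mem_right _ hy]
      using standardPairing_nondegenerate_right h1 h2 h3 h4 hy hy0
  · rw [domRestrict₁₂_standardPairing h1, finrank_range_dotProductBilin_compl₁₂
      (headRestrict_surjective h1) (headRestrict_surjective h3), Fintype.card_fin]
end

section
/- Let V, V_* be ℂ-vector spaces with a nondegenerate pairing ⟨·,·⟩ : V × V_* → ℂ. Suppose {vᵢ}_{i∈ℕ} ⊆ V and {vⁱ}_{i∈ℕ} ⊆ V_* satisfy ⟨vᵢ, vʲ⟩ = δᵢⱼ, and suppose the dual system {ℂvᵢ, ℂvⁱ} is not maximal: there exist v₀ ∈ V, v⁰ ∈ V_* with ⟨vᵢ, vʲ⟩ = δᵢⱼ for all i, j ∈ ℕ ∪ {0}. Write V = X ⊕ span{vᵢ} and V_* = Y ⊕ span{vⁱ}, v₀ = x + Σⱼ aⱼvⱼ with x ∈ X, v⁰ = y + Σₖ bₖvᵏ with y ∈ Y (finite sums). Setting λᵢ(x') := ⟨x', vⁱ⟩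 and μᵢ(y') := ⟨vᵢ, y'⟩ and ω := ⟨·,·⟩|_{X×Y}, then λᵢ(x) = −aᵢ, μᵢ(y) = −bᵢ (so x ∈ X₀, y ∈ Y₀), and ω̃(x,y) := ω(x,y) − Σₖ λₖ(x)μₖ(y) = 1. -/
open Function

section Biorthogonal

variable {R M N ι : Type*} [CommSemiring R] [AddCommMonoid M] [Module R M]
  [AddCommMonoid N] [Module R N] (B : M →ₗ[R] N →ₗ[R] R) {v : ι → M} {vs : ι → N}
  {a b : ι → R}

theorem LinearMap.apply_finsum_smul_left (ha : (support a).Finite) (w : N) :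
    B (∑ᶠ j, a j • v j) w = ∑ᶠ j, a j * B (v j) w := by
  simpa using (B.flip w).toAddMonoidHom.map_finsum (ha.subset (support_smul_subset_left a v))

theorem LinearMap.apply_finsum_smul_right (hb : (support b).Finite) (u : M) :
    B u (∑ᶠ k, b k • vs k) = ∑ᶠ k, b k * B u (vs k) := by
  simpa using (B u).toAddMonoidHom.map_finsum (hb.subset (support_smul_subset_left b vs))

variable [DecidableEq ι] {B}

theorem LinearMap.apply_finsum_smul_left_of_biorthogonal
    (hdual : ∀ i j, B (v i) (vs j) = if i = j then 1 else 0) (ha : (support a).Finite) (i : ι) :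
    B (∑ᶠ j, a j • v j) (vs i) = a i := by
  rw [B.apply_finsum_smul_left ha, finsum_eq_single _ i fun j hj => by simp [hdual, hj]]
  simp [hdual]

theorem LinearMap.apply_finsum_smul_right_of_biorthogonal
    (hdual : ∀ i j, B (v i) (vs j) = if i = j then 1 else 0) (hb : (support b).Finite) (i : ι) :
    B (v i) (∑ᶠ k, b k • vs k) = b i := by
  rw [B.apply_finsum_smul_right hb, finsum_eq_single _ i fun k hk => by simp [hdual, Ne.symm hk]]
  simp [hdual]

theorem LinearMap.apply_finsum_smul_finsum_smul_of_biorthogonal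
    (hdual : ∀ i j, B (v i) (vs j) = if i = j then 1 else 0)
    (ha : (support a).Finite) (hb : (support b).Finite) :
    B (∑ᶠ j, a j • v j) (∑ᶠ k, b k • vs k) = ∑ᶠ j, a j * b j := by
  rw [B.apply_finsum_smul_left ha]
  exact finsum_congr fun j => by rw [apply_finsum_smul_right_of_biorthogonal hdual hb]

end Biorthogonal

theorem stmt16_general (V Vs : Type*) [AddCommGroup V] [Module ℂ V] [AddCommGroup Vs] [Module ℂ Vs]
    (B : V →ₗ[ℂ] Vs →ₗ[ℂ] ℂ)
    (v : ℕ → V) (vs : ℕ → Vs)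
    (hdual : ∀ i j, B (v i) (vs j) = if i = j then 1 else 0)
    (v0 : V) (v0s : Vs)
    (hext1 : ∀ i, B v0 (vs i) = 0) (hext2 : ∀ i, B (v i) v0s = 0)
    (hext3 : B v0 v0s = 1)
    (x : V) (a : ℕ → ℂ) (ha : (Function.support a).Finite)
    (hdecx : v0 = x + ∑ᶠ j, a j • v j)
    (y : Vs) (b : ℕ → ℂ) (hb : (Function.support b).Finite)
    (hdecy : v0s = y + ∑ᶠ k, b k • vs k) :
    (∀ i, B x (vs i) = -a i) ∧ (∀ i, B (v i) y = -b i) ∧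
    {i : ℕ | B x (vs i) ≠ 0}.Finite ∧ {i : ℕ | B (v i) y ≠ 0}.Finite ∧
    B x y - ∑ᶠ k, B x (vs k) * B (v k) y = 1 := by
  have hx : x = v0 - ∑ᶠ j, a j • v j := eq_sub_of_add_eq hdecx.symm
  have hy : y = v0s - ∑ᶠ k, b k • vs k := eq_sub_of_add_eq hdecy.symm
  have hlam : ∀ i, B x (vs i) = -a i := fun i => by
    rw [hx, map_sub, LinearMap.sub_apply, hext1,
      B.apply_finsum_smul_left_of_biorthogonal hdual ha, zero_sub]
  have hmu : ∀ i, B (v i) y = -b i := fun i => by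
    rw [hy, map_sub, hext2, B.apply_finsum_smul_right_of_biorthogonal hdual hb, zero_sub]
  have hxy : B x y = 1 + ∑ᶠ j, a j * b j := by
    simp only [hx, hy, map_sub, LinearMap.sub_apply]
    rw [B.apply_finsum_smul_right hb, B.apply_finsum_smul_left ha,
      B.apply_finsum_smul_finsum_smul_of_biorthogonal hdual ha hb, hext3]
    simp [hext1, hext2]
  refine ⟨hlam, hmu, ?_, ?_, ?_⟩
  · simp only [hlam, ne_eq, neg_eq_zero]
    exact ha
  · simp only [hmu, ne_eq, neg_eq_zero]
    exact hb
  · simp only [hxy, hlam, hmu, neg_mul_neg, add_sub_cancel_right]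

/-- If a dual system `{ℂvᵢ, ℂvⁱ}` for `gl(V, V_*)` is not maximal, witnessed by an
extending pair `v₀, v⁰` decomposed along the complements `X, Y`, then the associated
complement datum is not maximal: `λᵢ(x) = −aᵢ`, `μᵢ(y) = −bᵢ` (so `x ∈ X₀`, `y ∈ Y₀`)
and `ω̃(x, y) = 1`. -/
theorem stmt16 (V Vs : Type*) [AddCommGroup V] [Module ℂ V] [AddCommGroup Vs] [Module ℂ Vs]
    (B : V →ₗ[ℂ] Vs →ₗ[ℂ] ℂ)
    (v : ℕ → V) (vs : ℕ → Vs)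
    (hdual : ∀ i j, B (v i) (vs j) = if i = j then 1 else 0)
    (X : Submodule ℂ V) (Y : Submodule ℂ Vs)
    (hX : IsCompl X (Submodule.span ℂ (Set.range v)))
    (hY : IsCompl Y (Submodule.span ℂ (Set.range vs)))
    (v0 : V) (v0s : Vs)
    (hext1 : ∀ i, B v0 (vs i) = 0) (hext2 : ∀ i, B (v i) v0s = 0)
    (hext3 : B v0 v0s = 1)
    (x : V) (hxX : x ∈ X) (a : ℕ → ℂ) (ha : (Function.support a).Finite)
    (hdecx : v0 = x + ∑ᶠ j, a j • v j)
    (y : Vs) (hyY : y ∈ Y) (b : ℕ → ℂ) (hb : (Function.support b).Finite)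
    (hdecy : v0s = y + ∑ᶠ k, b k • vs k) :
    (∀ i, B x (vs i) = -a i) ∧ (∀ i, B (v i) y = -b i) ∧
    {i : ℕ | B x (vs i) ≠ 0}.Finite ∧ {i : ℕ | B (v i) y ≠ 0}.Finite ∧
    B x y - ∑ᶠ k, B x (vs k) * B (v k) y = 1 :=
  stmt16_general V Vs B v vs hdual v0 v0s hext1 hext2 hext3 x a ha hdecx y b hb hdecy
end

section
/- Let V, V_* be vector spaces with pairing ⟨·,·⟩, and {ℂvᵢ, ℂvⁱ}_{i∈ℕ} a dual system (⟨vᵢ,vʲ⟩ = δᵢⱼ) with complements X, Y and functionals λᵢ, μᵢ as above. Suppose the compatible complement datum is not maximal: there exist x ∈ X₀, y ∈ Y₀ with ω̃(x,y) = 1. Then v₀ := x − Σⱼ λⱼ(x)vⱼ and v⁰ := y − Σₖ μₖ(y)vᵏ (finite sums since x ∈ X₀, y ∈ Y₀) satisfy ⟨v₀, vⁱ⟩ = 0 and ⟨vᵢ, v⁰⟩ = 0 for all i ≥ 1, and ⟨v₀, v⁰⟩ = 1; hence the dual system extends to a strictly larger dual system and is not maximal. -/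
/-!
Because `⟨vᵢ, vʲ⟩ = δᵢⱼ`, subtracting from `x` its finite expansion `Σ λⱼ(x) vⱼ` kills every
`⟨·, vⁱ⟩`; the same holds for `y` after flipping the pairing. Hence `⟨v₀, v⁰⟩ = ⟨v₀, y⟩`, and
`⟨v₀, y⟩` is `ω̃(x, y) = 1`.
-/

namespace LinearMap

variable {R M N ι : Type*} [CommRing R] [AddCommGroup M] [Module R M] [AddCommGroup N] [Module R N]

lemma apply_sub_finsum_smul (B : M →ₗ[R] N →ₗ[R] R) (v : ι → M) (vs : ι → N) {x : M}
    (hx : {i | B x (vs i) ≠ 0}.Finite) (y : N) :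
    B (x - ∑ᶠ j, B x (vs j) • v j) y = B x y - ∑ᶠ j, B x (vs j) * B (v j) y := by
  have hB : B (∑ᶠ j, B x (vs j) • v j) y = ∑ᶠ j, B (B x (vs j) • v j) y :=
    map_finsum (B.flip y) <| Function.HasFiniteSupport.smul_left (f := fun j => B x (vs j)) hx v
  rw [map_sub, sub_apply, hB]
  simp only [map_smul, smul_apply, smul_eq_mul]

lemma apply_sub_finsum_smul_eq_zero [DecidableEq ι] (B : M →ₗ[R] N →ₗ[R] R)
    (v : ι → M) (vs : ι → N) (hdual : ∀ i j, B (v i) (vs j) = if i = j then 1 else 0) {x : M}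
    (hx : {i | B x (vs i) ≠ 0}.Finite) (i : ι) :
    B (x - ∑ᶠ j, B x (vs j) • v j) (vs i) = 0 := by
  rw [apply_sub_finsum_smul B v vs hx, finsum_eq_single _ i, hdual, if_pos rfl, mul_one, sub_self]
  intro j hji
  rw [hdual, if_neg hji, mul_zero]

end LinearMap

open LinearMap in
/-- If the complement datum associated to a dual system `{ℂvᵢ, ℂvⁱ}` is not maximal,
witnessed by `x ∈ X₀`, `y ∈ Y₀` with `ω̃(x,y) = 1`, then `v₀ := x − Σ λⱼ(x) vⱼ` and
`v⁰ := y − Σ μₖ(y) vᵏ` extend the dual system: `⟨v₀, vⁱ⟩ = 0`, `⟨vᵢ, v⁰⟩ = 0`, and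
`⟨v₀, v⁰⟩ = 1`; hence the dual system is not maximal. -/
theorem stmt17 (V Vs : Type*) [AddCommGroup V] [Module ℂ V] [AddCommGroup Vs] [Module ℂ Vs]
    (B : V →ₗ[ℂ] Vs →ₗ[ℂ] ℂ)
    (v : ℕ → V) (vs : ℕ → Vs)
    (hdual : ∀ i j, B (v i) (vs j) = if i = j then 1 else 0)
    (x : V) (y : Vs)
    (hx : {i : ℕ | B x (vs i) ≠ 0}.Finite) (hy : {i : ℕ | B (v i) y ≠ 0}.Finite)
    (homega : B x y - ∑ᶠ i, B x (vs i) * B (v i) y = 1)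
    (v0 : V) (hv0 : v0 = x - ∑ᶠ j, B x (vs j) • v j)
    (v0s : Vs) (hv0s : v0s = y - ∑ᶠ k, B (v k) y • vs k) :
    (∀ i, B v0 (vs i) = 0) ∧ (∀ i, B (v i) v0s = 0) ∧ B v0 v0s = 1 := by
  have hdual_flip : ∀ i j, B.flip (vs i) (v j) = if i = j then 1 else 0 := fun i j => by
    rw [flip_apply, hdual]
    simp only [eq_comm]
  have hv0_perp : ∀ i, B v0 (vs i) = 0 := hv0 ▸ apply_sub_finsum_smul_eq_zero B v vs hdual hx
  have hv0s_perp : ∀ i, B (v i) v0s = 0 :=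
    hv0s ▸ apply_sub_finsum_smul_eq_zero B.flip vs v hdual_flip hy
  refine ⟨hv0_perp, hv0s_perp, ?_⟩
  calc B v0 v0s = B v0 y - ∑ᶠ k, B (v k) y * B v0 (vs k) :=
        hv0s ▸ apply_sub_finsum_smul B.flip vs v hy v0
    _ = B v0 y := by simp only [hv0_perp, mul_zero, finsum_zero, sub_zero]
    _ = 1 := by rw [hv0, apply_sub_finsum_smul B v vs hx, homega]
end
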